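/- arXiv:1410.5269 — 3 statements merged into one kernel-verified Lean document; each statement's English description precedes it below -/
import Mathlib

section
/- Let R be a commutative ring, I a finitely generated ideal of R, and (N_α)_{α ∈ A} an arbitrary family of R-modules. Then the natural map, induced by the projections, from the I-adic completion of the product ∏_{α∈A} N_α to the product ∏_{α∈A} (N_α)^∧_I of the I-adic completions is an isomorphism of R-modules. -/
/-!
Statement 2: For a commutative ring `R`, a finitely generated ideal `I` and an arbitrary family
of `R`-modules `(N α)`, the natural map (induced by the projections) from the `I`-adic completion
of the product to the product of the `I`-adic completions is an isomorphism.
-/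

universe u v w

variable {R : Type u} [CommRing R] (I : Ideal R)

/-- The `R`-linear map on adic completions induced by a linear map (the `R`-linear version of
`AdicCompletion.map`). -/
noncomputable def AdicCompletion.mapR {M N : Type*} [AddCommGroup M] [Module R M]
    [AddCommGroup N] [Module R N] (f : M →ₗ[R] N) :
    AdicCompletion I M →ₗ[R] AdicCompletion I N where
  toFun := AdicCompletion.map I f
  map_add' x y := map_add _ x y
  map_smul' r x := by
    ext n
    simp only [AdicCompletion.map_val_apply, AdicCompletion.val_smul, RingHom.id_apply]
    induction (x.val n) using Quotient.inductionOn' with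
    | h y =>
      simp [Submodule.Quotient.mk''_eq_mk, ← Submodule.Quotient.mk_smul]

/-- For a finitely generated ideal `J`, an element of a product module all of whose components
lie in `J • ⊤` lies in `J • ⊤` of the product. -/
lemma pi_mem_smul_top {A : Type v} {N : A → Type w} [∀ α, AddCommGroup (N α)]
    [∀ α, Module R (N α)] (J : Ideal R) (hJ : J.FG) (x : ∀ α, N α)
    (hx : ∀ α, x α ∈ J • (⊤ : Submodule R (N α))) :
    x ∈ J • (⊤ : Submodule R (∀ α, N α)) := by
  classical
  obtain ⟨s, rfl⟩ := hJ
  induction s using Finset.induction_on generalizing x with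
  | empty =>
    have : x = 0 := by
      funext α
      have := hx α
      simpa [Submodule.mem_bot] using this
    simp [this]
  | @insert a s ha ih =>
    have hmem : ∀ α, ∃ u ∈ (Ideal.span {a} : Ideal R) • (⊤ : Submodule R (N α)),
        ∃ v ∈ (Ideal.span (s : Set R) : Ideal R) • (⊤ : Submodule R (N α)), u + v = x α := by
      intro α
      have := hx α
      rw [Finset.coe_insert, ← Set.singleton_union, Ideal.span_union,
        Submodule.sup_smul] at this
      exact Submodule.mem_sup.mp this
    choose u hu v hv huv using hmem
    have hrep : ∀ α, ∃ w : N α, a • w = u α := by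
      intro α
      have := hu α
      rw [Submodule.ideal_span_singleton_smul, ← SetLike.mem_coe,
        Submodule.coe_pointwise_smul] at this
      obtain ⟨w, -, hw⟩ := this
      exact ⟨w, hw⟩
    choose w hw using hrep
    have hx' : x = (fun α => u α) + (fun α => v α) := by
      funext α; simp [huv α]
    rw [hx', Finset.coe_insert, ← Set.singleton_union, Ideal.span_union, Submodule.sup_smul]
    refine Submodule.add_mem_sup ?_ (ih v hv)
    rw [Submodule.ideal_span_singleton_smul]
    have : (fun α => u α) = a • w := by funext α; simp [← hw α]
    rw [this]
    exact Submodule.smul_mem_pointwise_smul _ _ _ Submodule.mem_top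

theorem adicCompletion_pi_bijective (hI : I.FG)
    (A : Type v) (N : A → Type w) [∀ α, AddCommGroup (N α)] [∀ α, Module R (N α)] :
    Function.Bijective
      (LinearMap.pi (fun α => AdicCompletion.mapR I (LinearMap.proj α : (∀ a, N a) →ₗ[R] N α)) :
        AdicCompletion I (∀ a, N a) →ₗ[R] ∀ α, AdicCompletion I (N α)) := by
  classical
  have hpow : ∀ n : ℕ, (I ^ n).FG := fun n => Submodule.FG.pow hI n
  constructor
  · intro x y hxy
    apply Subtype.ext
    funext n
    obtain ⟨mx, hmx⟩ := Submodule.Quotient.mk_surjective _ (x.val n)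
    obtain ⟨my, hmy⟩ := Submodule.Quotient.mk_surjective _ (y.val n)
    have hval : ∀ α,
        (LinearMap.proj α : (∀ a, N a) →ₗ[R] N α).reduceModIdeal (I ^ n) (x.val n) =
        (LinearMap.proj α : (∀ a, N a) →ₗ[R] N α).reduceModIdeal (I ^ n) (y.val n) := by
      intro α
      have := congrFun hxy α
      have h2 := congrFun (congrArg Subtype.val this) n
      simpa only [AdicCompletion.mapR, LinearMap.coe_mk, AddHom.coe_mk, LinearMap.pi_apply,
        AdicCompletion.map_val_apply] using h2
    have hcomp : ∀ α, (mx - my) α ∈ (I ^ n • ⊤ : Submodule R (N α)) := by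
      intro α
      have := hval α
      rw [← hmx, ← hmy, LinearMap.reduceModIdeal_apply, LinearMap.reduceModIdeal_apply] at this
      simpa [Pi.sub_apply] using (Submodule.Quotient.eq _).mp this
    rw [← hmx, ← hmy]
    exact (Submodule.Quotient.eq _).mpr (pi_mem_smul_top (I ^ n) (hpow n) _ hcomp)
  · intro y
    have hrep : ∀ n : ℕ, ∃ g : ∀ α, N α, ∀ α,
        Submodule.Quotient.mk (p := (I ^ n • ⊤ : Submodule R (N α))) (g α) = (y α).val n := by
      intro n
      choose g hg using fun α => Submodule.Quotient.mk_surjective _ ((y α).val n)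
      exact ⟨g, hg⟩
    choose g hg using hrep
    have hcompat : ∀ {m n : ℕ}, m ≤ n → g n - g m ∈ (I ^ m • ⊤ : Submodule R (∀ a, N a)) := by
      intro m n hmn
      refine pi_mem_smul_top (I ^ m) (hpow m) _ (fun α => ?_)
      have h1 : AdicCompletion.transitionMap I (N α) hmn ((y α).val n) = (y α).val m :=
        (y α).property hmn
      rw [← hg n α, ← hg m α] at h1
      have h2 : AdicCompletion.transitionMap I (N α) hmn
          (Submodule.Quotient.mk (p := (I ^ n • ⊤ : Submodule R (N α))) (g n α)) =
          Submodule.Quotient.mk (p := (I ^ m • ⊤ : Submodule R (N α))) (g n α) := rfl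
      rw [h2] at h1
      simpa [Pi.sub_apply] using (Submodule.Quotient.eq _).mp h1
    refine ⟨⟨fun n => Submodule.Quotient.mk (g n), ?_⟩, ?_⟩
    · intro m n hmn
      show Submodule.Quotient.mk (g n) = Submodule.Quotient.mk (g m)
      exact (Submodule.Quotient.eq _).mpr (hcompat hmn)
    · funext α
      apply Subtype.ext
      funext n
      show (LinearMap.proj α : (∀ a, N a) →ₗ[R] N α).reduceModIdeal (I ^ n)
          (Submodule.Quotient.mk (g n)) = (y α).val n
      rw [LinearMap.reduceModIdeal_apply]
      exact hg n α
end

section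
/- Let C and F be additive categories with cokernels, and suppose there are functors U : F → C and T : C → F with U left adjoint to T, i.e. natural isomorphisms Hom_F(X, T(Y)) ≅ Hom_C(U(X), Y). If (D, S) is an injective class in C, then the pair (D', S') is an injective class in F, where D' is the class of all retracts of objects of the form T(I) with I in D, and S' is the class of all morphisms f of F such that U(f) lies in S. -/
/-!
Statement 9: Transfer of an injective class along an adjunction `U ⊣ T` between additive
categories with cokernels: the retracts of objects `T(I)` with `I` relatively injective, together
with the morphisms `f` such that `U(f)` is a relative monomorphism, form an injective class.
-/

open CategoryTheory

universe v₁ v₂ u₁ u₂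

/-- An injective class in a category `C`: a class of objects `D` (the relative injectives) and a
class of morphisms `S` (the relative monomorphisms) determining each other by the lifting
property, with enough relative injectives. -/
structure IsInjectiveClass {C : Type u₁} [Category.{v₁} C] (D : C → Prop)
    (S : MorphismProperty C) : Prop where
  mem_D_iff : ∀ I : C, D I ↔ ∀ ⦃A B : C⦄ (f : A ⟶ B), S f →
    Function.Surjective (fun g : B ⟶ I => f ≫ g)
  mem_S_iff : ∀ ⦃A B : C⦄ (f : A ⟶ B), S f ↔ ∀ I : C, D I →
    Function.Surjective (fun g : B ⟶ I => f ≫ g)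
  exists_to_injective : ∀ A : C, ∃ (Q : C) (f : A ⟶ Q), D Q ∧ S f


section Aux

variable {C : Type u₁} [Category.{v₁} C] {F : Type u₂} [Category.{v₂} F]
  (U : F ⥤ C) (T : C ⥤ F) (adj : U ⊣ T)
  (D : C → Prop) (S : MorphismProperty C) (h : IsInjectiveClass D S)

include adj h

/-- If `f : A ⟶ B` has `U f ∈ S` and `X` is a retract of `T I` with `I ∈ D`,
then maps to `X` extend along `f`. -/
lemma lift_of_retract {A B : F} (f : A ⟶ B) (hf : S (U.map f))
    {X : F} (hX : ∃ I : C, D I ∧ ∃ (i : X ⟶ T.obj I) (r : T.obj I ⟶ X), i ≫ r = 𝟙 X) :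
    Function.Surjective (fun g : B ⟶ X => f ≫ g) := by
  obtain ⟨I, hI, i, r, hir⟩ := hX
  intro g
  obtain ⟨k, hk⟩ := (h.mem_S_iff (U.map f)).mp hf I hI ((adj.homEquiv A I).symm (g ≫ i))
  simp only at hk
  refine ⟨adj.homEquiv B I k ≫ r, ?_⟩
  have hfi : f ≫ adj.homEquiv B I k = g ≫ i := by
    rw [← adj.homEquiv_naturality_left, hk, Equiv.apply_symm_apply]
  simp only [← Category.assoc, hfi]
  rw [Category.assoc, hir, Category.comp_id]

/-- If `s : U X ⟶ I` is in `S`, then its adjoint transpose lies in the transferred class. -/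
lemma transpose_mem {X : F} {I : C} (s : U.obj X ⟶ I) (hs : S s) :
    S (U.map (adj.homEquiv X I s)) := by
  rw [h.mem_S_iff]
  intro J hJ g
  obtain ⟨k, hk⟩ := (h.mem_S_iff s).mp hs J hJ g
  simp only at hk
  refine ⟨adj.counit.app I ≫ k, ?_⟩
  have : U.map (adj.homEquiv X I s) ≫ adj.counit.app I = s :=
    (adj.homEquiv X I).symm_apply_apply s
  simp only [← Category.assoc, this, hk]

end Aux

theorem isInjectiveClass_of_adjunction
    {C : Type u₁} [Category.{v₁} C] {F : Type u₂} [Category.{v₂} F]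
    [Preadditive C] [Preadditive F] [Limits.HasCokernels C] [Limits.HasCokernels F]
    (U : F ⥤ C) (T : C ⥤ F) (adj : U ⊣ T)
    (D : C → Prop) (S : MorphismProperty C) (h : IsInjectiveClass D S) :
    IsInjectiveClass
      (fun X : F => ∃ I : C, D I ∧ ∃ (i : X ⟶ T.obj I) (r : T.obj I ⟶ X), i ≫ r = 𝟙 X)
      (fun _ _ f => S (U.map f)) := by
  constructor
  · intro X
    constructor
    · intro hX A B f hf
      exact lift_of_retract U T adj D S h f hf hX
    · intro hX
      obtain ⟨I, s, hI, hs⟩ := h.exists_to_injective (U.obj X)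
      obtain ⟨r, hr⟩ := hX (adj.homEquiv X I s) (transpose_mem U T adj D S h s hs) (𝟙 X)
      exact ⟨I, hI, adj.homEquiv X I s, r, hr⟩
  · intro A B f
    constructor
    · intro hf X hX
      exact lift_of_retract U T adj D S h f hf hX
    · intro hf
      rw [h.mem_S_iff]
      intro J hJ g
      obtain ⟨k, hk⟩ := hf (T.obj J) ⟨J, hJ, 𝟙 _, 𝟙 _, Category.comp_id _⟩ (adj.homEquiv A J g)
      simp only at hk
      refine ⟨(adj.homEquiv B J).symm k, ?_⟩
      simp only
      rw [← Adjunction.homEquiv_naturality_left_symm, hk, Equiv.symm_apply_apply]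
  · intro A
    obtain ⟨I, s, hI, hs⟩ := h.exists_to_injective (U.obj A)
    exact ⟨T.obj I, adj.homEquiv A I s, ⟨I, hI, 𝟙 _, 𝟙 _, Category.comp_id _⟩,
      transpose_mem U T adj D S h s hs⟩
end

section
/- Let p be a prime and let ℤ_(p) denote the localization of ℤ at the prime ideal (p). If M is an injective ℤ_(p)-module, then L_0 M = 0, where L_0 is the zeroth left derived functor of p-adic completion on ℤ_(p)-modules. -/
/-!
`L₀ M` is the cokernel of `Λ P₁ → Λ P₀` for a projective resolution `P₁ → P₀ → M`, where `Λ` is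
`p`-adic completion. An injective `ℤ_(p)`-module is divisible by the non-zero-divisor `p`, so
`M = p M`, i.e. the image of `P₁` together with `p P₀` spans `P₀`. A map that is surjective modulo
`p` induces a surjection on `p`-adic completions (successive approximation), hence `L₀ M = 0`.
-/

open CategoryTheory

universe u

variable (R : Type u) [CommRing R] (I : Ideal R)

theorem AdicCompletion.mapR_smul {M N : Type u} [AddCommGroup M] [Module R M]
    [AddCommGroup N] [Module R N] (f : M →ₗ[R] N) (r : R) (x : AdicCompletion I M) :
    AdicCompletion.map I f (r • x) = r • AdicCompletion.map I f x := by
  ext n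
  simp only [AdicCompletion.map_val_apply, AdicCompletion.val_smul]
  induction (x.val n) using Quotient.inductionOn' with
  | h y =>
    simp [Submodule.Quotient.mk''_eq_mk, ← Submodule.Quotient.mk_smul]

/-- The `I`-adic completion functor on the category of `R`-modules. -/
noncomputable def completionFunctor : ModuleCat.{u} R ⥤ ModuleCat.{u} R where
  obj M := ModuleCat.of R (AdicCompletion I M)
  map {M N} f := ModuleCat.ofHom
    { toFun := AdicCompletion.map I f.hom
      map_add' := fun x y => map_add _ x y
      map_smul' := fun r x => AdicCompletion.mapR_smul R I f.hom r x }
  map_id M := by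
    refine ModuleCat.hom_ext (LinearMap.ext fun x => ?_)
    exact LinearMap.congr_fun (AdicCompletion.map_id I M) x
  map_comp {M N P} f g := by
    refine ModuleCat.hom_ext (LinearMap.ext fun x => ?_)
    exact (AdicCompletion.map_comp_apply I f.hom g.hom x).symm

instance : (completionFunctor R I).Additive where
  map_add {M N f g} := by
    refine ModuleCat.hom_ext (LinearMap.ext fun (x : AdicCompletion I M) => ?_)
    refine AdicCompletion.ext (fun n => ?_)
    show (AdicCompletion.map I (f + g).hom x).val n
      = (AdicCompletion.map I f.hom x + AdicCompletion.map I g.hom x).val n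
    simp only [AdicCompletion.map_val_apply, AdicCompletion.val_add]
    obtain ⟨y, hy⟩ := Submodule.Quotient.mk_surjective _ (x.val n)
    erw [← hy]
    simp [Submodule.Quotient.mk_add]
    erw [← hy]
    simp

/-- The natural transformation from the identity to the completion functor. -/
noncomputable def completionUnit : 𝟭 (ModuleCat.{u} R) ⟶ completionFunctor R I where
  app M := ModuleCat.ofHom (AdicCompletion.of I M)
  naturality {M N} f := by
    ext x
    rfl

/-- The `s`-th left derived functor of `I`-adic completion. -/
noncomputable def derivedCompletion (s : ℕ) : ModuleCat.{u} R ⥤ ModuleCat.{u} R :=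
  (completionFunctor R I).leftDerived s

/-- The canonical natural map `M ⟶ L₀ M`. -/
noncomputable def toDerivedCompletionZero : 𝟭 (ModuleCat.{u} R) ⟶ derivedCompletion R I 0 :=
  (Functor.leftDerivedZeroIsoSelf (𝟭 (ModuleCat.{u} R))).inv ≫
    NatTrans.leftDerived (completionUnit R I) 0

instance span_int_p_isPrime (p : ℕ) [hp : Fact p.Prime] :
    (Ideal.span {(p : ℤ)}).IsPrime :=
  (Ideal.span_singleton_prime (by exact_mod_cast hp.out.ne_zero)).mpr
    (Nat.prime_iff_prime_int.mp hp.out)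

/-- The localization `ℤ_(p)` of `ℤ` at the prime ideal `(p)`. -/
abbrev ZLoc (p : ℕ) [Fact p.Prime] : Type :=
  Localization.AtPrime (Ideal.span {(p : ℤ)})

universe v w

theorem Module.Injective.exists_smul_eq {R : Type v} {M : Type w} [CommRing R] [Small.{w} R]
    [AddCommGroup M] [Module R M] [Module.Injective R M] {r : R} (hr : IsLeftRegular r)
    (x : M) : ∃ y : M, r • y = x := by
  obtain ⟨h, hh⟩ := Module.Injective.extension_property R M R R (LinearMap.mulLeft R r) hr
    (LinearMap.toSpanSingleton R M x)
  refine ⟨h 1, ?_⟩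
  simpa [← map_smul] using LinearMap.congr_fun hh 1

theorem Module.Injective.span_singleton_smul_top {R : Type v} {M : Type w} [CommRing R]
    [Small.{w} R] [AddCommGroup M] [Module R M] [Module.Injective R M] {r : R}
    (hr : IsLeftRegular r) : Ideal.span {r} • (⊤ : Submodule R M) = ⊤ := by
  refine eq_top_iff.2 fun x _ => ?_
  obtain ⟨y, rfl⟩ := Module.Injective.exists_smul_eq hr x
  exact Submodule.smul_mem_smul (Ideal.mem_span_singleton_self r) trivial

theorem Function.Exact.surjective_mkQ_comp_of_smul_top_eq_top {R A B C : Type*} [CommRing R]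
    {I : Ideal R} [AddCommGroup A] [Module R A] [AddCommGroup B] [Module R B] [AddCommGroup C]
    [Module R C] {f : A →ₗ[R] B} {g : B →ₗ[R] C} (hfg : Function.Exact f g)
    (hg : Function.Surjective g) (hC : I • (⊤ : Submodule R C) = ⊤) :
    Function.Surjective ((I • ⊤ : Submodule R B).mkQ ∘ₗ f) := by
  rintro ⟨v⟩
  obtain ⟨w, hw, hwv⟩ : ∃ w ∈ (I • ⊤ : Submodule R B), g w = g v := by
    rw [← Submodule.mem_map, Submodule.map_smul'', Submodule.map_top,
      LinearMap.range_eq_top.2 hg, hC]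
    trivial
  obtain ⟨a, ha⟩ := (hfg (v - w)).1 (by rw [map_sub, hwv, sub_self])
  refine ⟨a, ?_⟩
  simp only [LinearMap.coe_comp, Function.comp_apply, Submodule.mkQ_apply, ha]
  exact (Submodule.Quotient.eq _).2 (by simpa using hw)

theorem CategoryTheory.ProjectiveResolution.isZero_leftDerived_zero_obj {R : Type*} [Ring R]
    {C : Type*} [Category C] [Abelian C] [HasProjectiveResolutions C] (F : C ⥤ ModuleCat R)
    [F.Additive] {X : C} (P : ProjectiveResolution X)
    (h : Function.Surjective (F.map (P.complex.d 1 0))) :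
    Limits.IsZero ((F.leftDerived 0).obj X) := by
  refine Limits.IsZero.of_iso ?_ (P.isoLeftDerivedObj F 0)
  refine (HomologicalComplex.exactAt_iff_isZero_homology _ 0).mp ?_
  rw [HomologicalComplex.exactAt_iff' _ 1 0 0 (ChainComplex.prev ℕ 0) ChainComplex.next_nat_zero,
    ShortComplex.moduleCat_exact_iff]
  exact fun x _ => h x

instance ZLoc.charZero (p : ℕ) [Fact p.Prime] : CharZero (ZLoc p) :=
  charZero_of_injective_algebraMap <| IsLocalization.injective
    (M := (Ideal.span {(p : ℤ)}).primeCompl) (ZLoc p) (Ideal.primeCompl_le_nonZeroDivisors _)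

/-- if `M` is an injective `ℤ_(p)`-module then `L₀ M = 0`, where `L₀` is the zeroth
left derived functor of `p`-adic completion on `ℤ_(p)`-modules. -/
theorem L0_of_injective_isZero (p : ℕ) [Fact p.Prime]
    (M : Type) [AddCommGroup M] [Module (ZLoc p) M]
    (hM : Module.Injective (ZLoc p) M) :
    Limits.IsZero ((derivedCompletion (ZLoc p) (Ideal.span {(p : ZLoc p)}) 0).obj
      (ModuleCat.of (ZLoc p) M)) := by
  have hdiv : Ideal.span {(p : ZLoc p)} • (⊤ : Submodule (ZLoc p) M) = ⊤ :=
    Module.Injective.span_singleton_smul_top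
      (IsRegular.of_ne_zero (Nat.cast_ne_zero.2 (Fact.out : p.Prime).ne_zero)).left
  let P := projectiveResolution (ModuleCat.of (ZLoc p) M)
  refine P.isZero_leftDerived_zero_obj _ (AdicCompletion.map_surjective_of_mkQ_comp_surjective ?_)
  exact Function.Exact.surjective_mkQ_comp_of_smul_top_eq_top
    ((ShortComplex.ShortExact.moduleCat_exact_iff_function_exact _).1 P.exact₀)
    ((ModuleCat.epi_iff_surjective _).1 inferInstance) hdiv
end
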